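/- arXiv:1802.06962 — 5 statements merged into one kernel-verified Lean document; each statement's English description precedes it below -/
import Mathlib

section
/- Let B be an anti-symmetric quiver matrix on n vertex pairs, let i : Fin n, and suppose there is no path through Sum.inl i. Assume that for every j : Fin n either (b̄ i j ≥ 0 and b̄ j i ≤ 0) or (b̄ i j ≤ 0 and b̄ j i ≥ 0), where b̄ is the shortened exchange matrix of B. Put B' := μ_{Sum.inr i}(μ_{Sum.inl i}(B)) and let b̄' be the shortened exchange matrix of B'. Then for all j, k : Fin n with j ≠ i and k ≠ i one has b̄' j k = b̄ j k + (max 0 (-(b̄ j i))) * b̄ i k + (max 0 (b̄ i k)) * b̄ j i. -/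
/-- Matrix mutation at an index `v`. -/
def mutate {ι : Type*} [DecidableEq ι] (B : Matrix ι ι ℤ) (v : ι) : Matrix ι ι ℤ :=
  Matrix.of fun x y =>
    if x = v ∨ y = v then -B x y
    else B x y + (B x v).sign * max (B x v * B v y) 0

/-- Anti-symmetric quiver matrix on `n` vertex pairs. -/
def IsAntiSymQuiver {n : ℕ} (B : Matrix (Fin n ⊕ Fin n) (Fin n ⊕ Fin n) ℤ) : Prop :=
  (∀ x y, B x y = - B y x) ∧
  (∀ x y, B x y = B (Sum.swap y) (Sum.swap x)) ∧
  (∀ x, B x (Sum.swap x) = 0)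

/-- The (square) shortened exchange matrix. -/
def sbar {n : ℕ} (B : Matrix (Fin n ⊕ Fin n) (Fin n ⊕ Fin n) ℤ) : Fin n → Fin n → ℤ :=
  fun j k => B (Sum.inl j) (Sum.inl k) + B (Sum.inr j) (Sum.inl k)

/-- No path through the vertex `Sum.inl i`. -/
def NoPathThrough {n : ℕ} (B : Matrix (Fin n ⊕ Fin n) (Fin n ⊕ Fin n) ℤ) (i : Fin n) : Prop :=
  ∀ x, ¬ (0 < B x (Sum.inl i) ∧ 0 < B (Sum.inl i) (Sum.swap x))

/-!
Because `B (inl i) (inr i) = 0 = B (inr i) (inl i)`, the first mutation does not change row and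
column `inr i` away from `inl i`, so off `{inl i, inr i}` the double mutation just adds the two
correction terms through `inl i` and through `inr i`. The swap symmetry expresses the four
correction terms entering `b̄' j k` through the entries `α = B (inl i) (inl j)`,
`β = B (inl i) (inr j)`, `r = B (inl i) (inl k)`, `s = B (inl i) (inr k)` of row `inl i`.
The no-path and sign hypotheses say exactly that `β` lies between `0` and `α`, and `s` between
`0` and `r`; under these constraints the claimed formula is a short case check.
-/

open Sum

lemma mutate_apply_of_ne {ι : Type*} [DecidableEq ι] (B : Matrix ι ι ℤ) {v x y : ι}
    (hx : x ≠ v) (hy : y ≠ v) :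
    mutate B v x y = B x y + (B x v).sign * max (B x v * B v y) 0 := by
  simp [mutate, hx, hy]

lemma mutate_mutate_apply {ι : Type*} [DecidableEq ι] (B : Matrix ι ι ℤ) {v w x y : ι}
    (hwv : w ≠ v) (hBvw : B v w = 0) (hBwv : B w v = 0)
    (hxv : x ≠ v) (hxw : x ≠ w) (hyv : y ≠ v) (hyw : y ≠ w) :
    mutate (mutate B v) w x y =
      B x y + (B x v).sign * max (B x v * B v y) 0 + (B x w).sign * max (B x w * B w y) 0 := by
  rw [mutate_apply_of_ne _ hxw hyw, mutate_apply_of_ne _ hxv hyv, mutate_apply_of_ne _ hxv hwv,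
    mutate_apply_of_ne _ hwv hyv, hBvw, hBwv]
  simp

lemma Int.sign_mul_max_mul_of_nonneg {b : ℤ} (hb : 0 ≤ b) (c : ℤ) :
    b.sign * max (b * c) 0 = b * max c 0 := by
  rcases hb.eq_or_lt with rfl | hb
  · simp
  · rw [Int.sign_eq_one_of_pos hb, one_mul, mul_max_of_nonneg _ _ hb.le, mul_zero]

lemma Int.sign_mul_max_mul_of_nonpos {b : ℤ} (hb : b ≤ 0) (c : ℤ) :
    b.sign * max (b * c) 0 = b * max (-c) 0 := by
  have h := Int.sign_mul_max_mul_of_nonneg (neg_nonneg.2 hb) (-c)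
  rw [Int.sign_neg, neg_mul_neg] at h
  linear_combination -h

/-- The four correction terms of `b̄' j k`, written in the row-`inl i` entries `α β r s`. -/
lemma sign_mul_max_correction_sum {α β r s : ℤ}
    (hβ : β ∈ Set.uIcc 0 α) (hs : s ∈ Set.uIcc 0 r) :
    (-α).sign * max (-α * r) 0 + β.sign * max (β * -s) 0
      + ((-β).sign * max (-β * r) 0 + α.sign * max (α * -s) 0) =
    max 0 (-(-α + -β)) * (r + -s) + max 0 (r + -s) * (-α + -β) := by
  rw [Set.mem_uIcc] at hβ hs
  rcases hβ with ⟨hβ, hβα⟩ | ⟨hαβ, hβ⟩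
  · have hr : max (-s) 0 - max (-r) 0 = r - s - max 0 (r + -s) := by omega
    rw [Int.sign_mul_max_mul_of_nonpos (by omega : -α ≤ 0),
      Int.sign_mul_max_mul_of_nonneg hβ, Int.sign_mul_max_mul_of_nonpos (by omega : -β ≤ 0),
      Int.sign_mul_max_mul_of_nonneg (by omega : 0 ≤ α),
      max_eq_right (by omega : 0 ≤ -(-α + -β))]
    linear_combination (α + β) * hr
  · have hr : max r 0 - max (-(-s)) 0 = max 0 (r + -s) := by omega
    rw [Int.sign_mul_max_mul_of_nonneg (by omega : 0 ≤ -α),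
      Int.sign_mul_max_mul_of_nonpos hβ, Int.sign_mul_max_mul_of_nonneg (by omega : 0 ≤ -β),
      Int.sign_mul_max_mul_of_nonpos (by omega : α ≤ 0),
      max_eq_left (by omega : -(-α + -β) ≤ 0)]
    linear_combination (-α - β) * hr

lemma IsAntiSymQuiver.apply_inl_inr_mem_uIcc {n : ℕ}
    {B : Matrix (Fin n ⊕ Fin n) (Fin n ⊕ Fin n) ℤ} (hB : IsAntiSymQuiver B) {i : Fin n}
    (hpath : NoPathThrough B i) {j : Fin n}
    (hsign : (0 ≤ sbar B i j ∧ sbar B j i ≤ 0) ∨ (sbar B i j ≤ 0 ∧ 0 ≤ sbar B j i)) :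
    B (inl i) (inr j) ∈ Set.uIcc 0 (B (inl i) (inl j)) := by
  obtain ⟨hskew, hsym, -⟩ := hB
  have hpath_inl := hpath (inl j)
  have hpath_inr := hpath (inr j)
  have hji : B (inl j) (inl i) = -B (inl i) (inl j) := hskew _ _
  have hji' : B (inr j) (inl i) = -B (inl i) (inr j) := hskew _ _
  have hij' : B (inr i) (inl j) = -B (inl i) (inr j) := (hsym _ _).trans hji'
  simp only [sbar, hji, hji', hij', swap_inl, swap_inr] at hsign hpath_inl hpath_inr
  rw [Set.mem_uIcc]
  omega

theorem stmt1 {n : ℕ} (B : Matrix (Fin n ⊕ Fin n) (Fin n ⊕ Fin n) ℤ)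
    (hB : IsAntiSymQuiver B) (i : Fin n) (hpath : NoPathThrough B i)
    (hsign : ∀ j : Fin n,
      (0 ≤ sbar B i j ∧ sbar B j i ≤ 0) ∨ (sbar B i j ≤ 0 ∧ 0 ≤ sbar B j i)) :
    ∀ j k : Fin n, j ≠ i → k ≠ i →
      sbar (mutate (mutate B (Sum.inl i)) (Sum.inr i)) j k =
        sbar B j k + max 0 (-(sbar B j i)) * sbar B i k
          + max 0 (sbar B i k) * sbar B j i := by
  intro j k hj hk
  have hβ := hB.apply_inl_inr_mem_uIcc hpath (hsign j)
  have hs := hB.apply_inl_inr_mem_uIcc hpath (hsign k)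
  obtain ⟨hskew, hsym, hzero⟩ := hB
  have hii : B (inl i) (inr i) = 0 := hzero (inl i)
  have hii' : B (inr i) (inl i) = 0 := hzero (inr i)
  have hji : B (inl j) (inl i) = -B (inl i) (inl j) := hskew _ _
  have hji' : B (inr j) (inl i) = -B (inl i) (inr j) := hskew _ _
  have hjri : B (inl j) (inr i) = B (inl i) (inr j) := hsym _ _
  have hrjri : B (inr j) (inr i) = B (inl i) (inl j) := hsym _ _
  have hrik : B (inr i) (inl k) = -B (inl i) (inr k) := (hsym _ _).trans (hskew _ _)
  simp only [sbar]
  rw [mutate_mutate_apply _ inr_ne_inl hii hii' (by simpa) inl_ne_inr (by simpa) inl_ne_inr,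
    mutate_mutate_apply _ inr_ne_inl hii hii' inr_ne_inl (by simpa) (by simpa) inl_ne_inr,
    hji, hji', hjri, hrjri, hrik]
  linear_combination sign_mul_max_correction_sum hβ hs
end

section
/- Let B be an anti-symmetric quiver matrix on n vertex pairs and let i, j, k : Fin n with j ≠ i and k ≠ i. Assume B (Sum.inl j) (Sum.inl i) ≥ 0, B (Sum.inr j) (Sum.inl i) ≥ 0, B (Sum.inl i) (Sum.inl k) ≤ 0 and B (Sum.inr i) (Sum.inl k) ≥ 0. Put B' := μ_{Sum.inr i}(μ_{Sum.inl i}(B)). Then the shortened exchange matrices satisfy b̄' j k = b̄ j k. -/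
theorem stmt3 {n : ℕ} (B : Matrix (Fin n ⊕ Fin n) (Fin n ⊕ Fin n) ℤ)
    (hB : IsAntiSymQuiver B) (i j k : Fin n) (hj : j ≠ i) (hk : k ≠ i)
    (h1 : 0 ≤ B (Sum.inl j) (Sum.inl i)) (h2 : 0 ≤ B (Sum.inr j) (Sum.inl i))
    (h3 : B (Sum.inl i) (Sum.inl k) ≤ 0) (h4 : 0 ≤ B (Sum.inr i) (Sum.inl k)) :
    sbar (mutate (mutate B (Sum.inl i)) (Sum.inr i)) j k = sbar B j k :=   by
  obtain ⟨hskew, hswap, hdiag⟩ := hB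
  have hz1 : B (Sum.inl i) (Sum.inr i) = 0 := hdiag (Sum.inl i)
  have hz2 : B (Sum.inr i) (Sum.inl i) = 0 := hdiag (Sum.inr i)
  have hji : B (Sum.inl j) (Sum.inr i) = - B (Sum.inr j) (Sum.inl i) := by
    rw [hswap (Sum.inl j) (Sum.inr i)]; exact hskew _ _
  have hjj : B (Sum.inr j) (Sum.inr i) = - B (Sum.inl j) (Sum.inl i) := by
    rw [hswap (Sum.inr j) (Sum.inr i)]; exact hskew _ _
  simp only [sbar, mutate, Matrix.of_apply, hj, hk, Sum.inl.injEq, Sum.inr.injEq,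
    reduceCtorEq, or_self, or_false, false_or, if_false, ite_false,
    hz1, hz2, mul_zero, zero_mul, max_self, Int.sign_zero, add_zero, hji, hjj]
  have m1 : max (B (Sum.inl j) (Sum.inl i) * B (Sum.inl i) (Sum.inl k)) 0 = 0 :=
    max_eq_right (by nlinarith)
  have m2 : max (B (Sum.inr j) (Sum.inl i) * B (Sum.inl i) (Sum.inl k)) 0 = 0 :=
    max_eq_right (by nlinarith)
  have m3 : max (-(B (Sum.inr j) (Sum.inl i) * B (Sum.inr i) (Sum.inl k))) 0 = 0 :=
    max_eq_right (by nlinarith)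
  have m4 : max (-(B (Sum.inl j) (Sum.inl i) * B (Sum.inr i) (Sum.inl k))) 0 = 0 :=
    max_eq_right (by nlinarith)
  simp [m1, m2, m3, m4]
end

section
/- Let B be an anti-symmetric quiver matrix on n vertex pairs and let i, j, k : Fin n with j ≠ i and k ≠ i. Assume B (Sum.inl j) (Sum.inl i) ≥ 0, B (Sum.inr j) (Sum.inl i) ≥ 0, B (Sum.inl i) (Sum.inl k) ≥ 0 and B (Sum.inr i) (Sum.inl k) ≤ 0. Put B' := μ_{Sum.inr i}(μ_{Sum.inl i}(B)). Then the shortened exchange matrices satisfy b̄' j k = b̄ j k + b̄ j i * b̄ i k. -/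
lemma key (a c : ℤ) (ha : 0 ≤ a) (hc : 0 ≤ c) : a.sign * max (a*c) 0 = a*c := by
  rcases ha.lt_or_eq with h | h
  · rw [Int.sign_eq_one_of_pos h, max_eq_left (mul_nonneg ha hc)]; ring
  · simp [← h]

lemma key2 (a c : ℤ) (ha : 0 ≤ a) (hc : c ≤ 0) : (-a).sign * max (-a*c) 0 = a*c := by
  have := key a (-c) ha (by linarith)
  rw [Int.sign_neg]
  have h2 : -a*c = a*(-c) := by ring
  rw [h2]; linarith

theorem stmt4 {n : ℕ} (B : Matrix (Fin n ⊕ Fin n) (Fin n ⊕ Fin n) ℤ)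
    (hB : IsAntiSymQuiver B) (i j k : Fin n) (hj : j ≠ i) (hk : k ≠ i)
    (h1 : 0 ≤ B (Sum.inl j) (Sum.inl i)) (h2 : 0 ≤ B (Sum.inr j) (Sum.inl i))
    (h3 : 0 ≤ B (Sum.inl i) (Sum.inl k)) (h4 : B (Sum.inr i) (Sum.inl k) ≤ 0) :
    sbar (mutate (mutate B (Sum.inl i)) (Sum.inr i)) j k =
      sbar B j k + sbar B j i * sbar B i k := by
  obtain ⟨hsk, hsy, hz⟩ := hB
  have z1 : B (Sum.inl i) (Sum.inr i) = 0 := hz (Sum.inl i)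
  have z2 : B (Sum.inr i) (Sum.inl i) = 0 := by rw [hsk]; simp [z1]
  have e1 : B (Sum.inl j) (Sum.inr i) = - B (Sum.inr j) (Sum.inl i) := by
    rw [hsy (Sum.inl j) (Sum.inr i), Sum.swap_inr, Sum.swap_inl, hsk]
  have e2 : B (Sum.inr j) (Sum.inr i) = - B (Sum.inl j) (Sum.inl i) := by
    rw [hsy (Sum.inr j) (Sum.inr i), Sum.swap_inr, Sum.swap_inr, hsk]
  simp only [sbar, mutate, Matrix.of_apply, Sum.inl.injEq, Sum.inr.injEq, hj, hk,
    reduceCtorEq, or_self, if_false, or_false, false_or, if_neg, z1, z2, e1, e2,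
    mul_zero, zero_mul, max_self, add_zero]
  rw [key _ _ h1 h3, key2 _ _ h2 h4, key _ _ h2 h3, key2 _ _ h1 h4]
  ring
end

section
/- Let n ≤ m, let B be an anti-symmetric quiver matrix on m vertex pairs whose first n pairs are mutable, and let i : Fin n (viewed inside Fin m). Suppose there is no path through Sum.inl i, and that for every j : Fin m either (b̄ i j ≥ 0 and b̄ j i ≤ 0) or (b̄ i j ≤ 0 and b̄ j i ≥ 0), where b̄ j k = B (Sum.inl j) (Sum.inl k) + B (Sum.inr j) (Sum.inl k) for j, k : Fin m. Let B̄ and B̄' be the m × n shortened exchange matrices of B and of B' := μ_{Sum.inr i}(μ_{Sum.inl i}(B)). Define E : Matrix (Fin m) (Fin m) ℤ to agree with the identity matrix except in column i, where E i i = −1 and E j i = max 0 (-(b̄ j i)) for j ≠ i; define F : Matrix (Fin n) (Fin n) ℤ to agree with the identity matrix except in row i, where F i i = −1 and F i k = max 0 (b̄ i k) for k ≠ i. Then E * B̄ * F = B̄'. -/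
lemma signmax (a c : ℤ) : a.sign * max (a * c) 0 = max a 0 * max c 0 - max (-a) 0 * max (-c) 0 := by
  rcases lt_trichotomy a 0 with ha | ha | ha <;> rcases lt_trichotomy c 0 with hc | hc | hc
  · rw [Int.sign_eq_neg_one_of_neg ha, max_eq_left (mul_pos_of_neg_of_neg ha hc).le,
      max_eq_right ha.le, max_eq_right hc.le, max_eq_left (by linarith : (0:ℤ) ≤ -a),
      max_eq_left (by linarith : (0:ℤ) ≤ -c)]; ring
  · subst hc; simp
  · rw [Int.sign_eq_neg_one_of_neg ha, max_eq_right (by nlinarith : a * c ≤ (0:ℤ)),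
      max_eq_right ha.le, max_eq_left hc.le, max_eq_left (by linarith : (0:ℤ) ≤ -a),
      max_eq_right (by linarith : -c ≤ (0:ℤ))]; ring
  · subst ha; simp
  · subst ha; simp
  · subst ha; simp
  · rw [Int.sign_eq_one_of_pos ha, max_eq_right (by nlinarith : a * c ≤ (0:ℤ)),
      max_eq_left ha.le, max_eq_right hc.le, max_eq_right (by linarith : -a ≤ (0:ℤ)),
      max_eq_left (by linarith : (0:ℤ) ≤ -c)]; ring
  · subst hc; simp
  · rw [Int.sign_eq_one_of_pos ha, max_eq_left (mul_pos ha hc).le,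
      max_eq_left ha.le, max_eq_left hc.le, max_eq_right (by linarith : -a ≤ (0:ℤ)),
      max_eq_right (by linarith : -c ≤ (0:ℤ))]; ring

lemma core (a1 a2 c1 c2 : ℤ)
    (ha : (a2 ≤ 0 ∧ 0 ≤ a1) ∨ (a1 ≤ 0 ∧ 0 ≤ a2))
    (hc : (c2 ≤ 0 ∧ 0 ≤ c1 ∧ 0 ≤ c1 + c2) ∨ (c1 ≤ 0 ∧ 0 ≤ c2 ∧ c1 + c2 ≤ 0)) :
    a1.sign * max (a1 * c1) 0 + a2.sign * max (a2 * c2) 0 +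
      (-a2).sign * max (-a2 * c1) 0 + (-a1).sign * max (-a1 * c2) 0 =
    max 0 (-(a1 - a2)) * (c1 + c2) + (a1 - a2) * max 0 (c1 + c2) := by
  rw [signmax, signmax, signmax, signmax]
  simp only [neg_neg]
  obtain ⟨h1, h2⟩ | ⟨h1, h2⟩ := ha <;> obtain ⟨h3, h4, h5⟩ | ⟨h3, h4, h5⟩ := hc
  · rw [max_eq_left h2, max_eq_left h4, max_eq_right h1, max_eq_right h3,
      max_eq_right (by linarith : -a1 ≤ (0:ℤ)), max_eq_right (by linarith : -c1 ≤ (0:ℤ)),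
      max_eq_left (by linarith : (0:ℤ) ≤ -a2), max_eq_left (by linarith : (0:ℤ) ≤ -c2),
      max_eq_left (by linarith : -(a1-a2) ≤ (0:ℤ)), max_eq_right h5]
    ring
  · rw [max_eq_left h2, max_eq_left h4, max_eq_right h1, max_eq_right h3,
      max_eq_right (by linarith : -a1 ≤ (0:ℤ)), max_eq_right (by linarith : -c2 ≤ (0:ℤ)),
      max_eq_left (by linarith : (0:ℤ) ≤ -a2), max_eq_left (by linarith : (0:ℤ) ≤ -c1),
      max_eq_left (by linarith : -(a1-a2) ≤ (0:ℤ)), max_eq_left h5]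
    ring
  · rw [max_eq_left h2, max_eq_left h4, max_eq_right h1, max_eq_right h3,
      max_eq_right (by linarith : -a2 ≤ (0:ℤ)), max_eq_right (by linarith : -c1 ≤ (0:ℤ)),
      max_eq_left (by linarith : (0:ℤ) ≤ -a1), max_eq_left (by linarith : (0:ℤ) ≤ -c2),
      max_eq_right (by linarith : (0:ℤ) ≤ -(a1-a2)), max_eq_right h5]
    ring
  · rw [max_eq_left h2, max_eq_left h4, max_eq_right h1, max_eq_right h3,
      max_eq_right (by linarith : -a2 ≤ (0:ℤ)), max_eq_right (by linarith : -c2 ≤ (0:ℤ)),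
      max_eq_left (by linarith : (0:ℤ) ≤ -a1), max_eq_left (by linarith : (0:ℤ) ≤ -c1),
      max_eq_right (by linarith : (0:ℤ) ≤ -(a1-a2)), max_eq_left h5]
    ring

lemma core' (a1 a2 a3 a4 c1 c2 : ℤ) (h3 : a3 = -a2) (h4 : a4 = -a1)
    (ha : (a2 ≤ 0 ∧ 0 ≤ a1) ∨ (a1 ≤ 0 ∧ 0 ≤ a2))
    (hc : (c2 ≤ 0 ∧ 0 ≤ c1 ∧ 0 ≤ c1 + c2) ∨ (c1 ≤ 0 ∧ 0 ≤ c2 ∧ c1 + c2 ≤ 0)) :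
    a1.sign * max (a1 * c1) 0 + a2.sign * max (a2 * c2) 0 +
      a3.sign * max (a3 * c1) 0 + a4.sign * max (a4 * c2) 0 =
    max 0 (-(a1 + a3)) * (c1 + c2) + (a1 + a3) * max 0 (c1 + c2) := by
  subst h3 h4
  simp only [← sub_eq_add_neg]
  exact core a1 a2 c1 c2 ha hc


/-- The `m × n` shortened exchange matrix, where the first `n` vertex pairs are mutable. -/
def sbarRect {m n : ℕ} (h : n ≤ m) (B : Matrix (Fin m ⊕ Fin m) (Fin m ⊕ Fin m) ℤ) :
    Matrix (Fin m) (Fin n) ℤ :=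
  Matrix.of fun j k =>
    B (Sum.inl j) (Sum.inl (Fin.castLE h k)) + B (Sum.inr j) (Sum.inl (Fin.castLE h k))

theorem stmt5 {m n : ℕ} (h : n ≤ m) (B : Matrix (Fin m ⊕ Fin m) (Fin m ⊕ Fin m) ℤ)
    (hB : IsAntiSymQuiver B) (i : Fin n)
    (hpath : NoPathThrough B (Fin.castLE h i))
    (hsign : ∀ j : Fin m,
      (0 ≤ sbar B (Fin.castLE h i) j ∧ sbar B j (Fin.castLE h i) ≤ 0) ∨
      (sbar B (Fin.castLE h i) j ≤ 0 ∧ 0 ≤ sbar B j (Fin.castLE h i)))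
    (E : Matrix (Fin m) (Fin m) ℤ)
    (hE : ∀ j k, E j k =
      if k = Fin.castLE h i then
        (if j = Fin.castLE h i then -1 else max 0 (-(sbar B j (Fin.castLE h i))))
      else (if j = k then 1 else 0))
    (F : Matrix (Fin n) (Fin n) ℤ)
    (hF : ∀ j k, F j k =
      if j = i then
        (if k = i then -1 else max 0 (sbar B (Fin.castLE h i) (Fin.castLE h k)))
      else (if j = k then 1 else 0)) :
    E * sbarRect h B * F =
      sbarRect h (mutate (mutate B (Sum.inl (Fin.castLE h i))) (Sum.inr (Fin.castLE h i))) := by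
  obtain ⟨hskew, hsym, hdiag⟩ := hB
  set I := Fin.castLE h i with hIdef
  set M := sbarRect h B with hMdef
  have hvv : B (Sum.inl I) (Sum.inl I) = 0 := by have := hskew (Sum.inl I) (Sum.inl I); omega
  have hww : B (Sum.inr I) (Sum.inr I) = 0 := by have := hskew (Sum.inr I) (Sum.inr I); omega
  have hvw : B (Sum.inl I) (Sum.inr I) = 0 := by simpa using hdiag (Sum.inl I)
  have hwv : B (Sum.inr I) (Sum.inl I) = 0 := by simpa using hdiag (Sum.inr I)
  -- left multiplication by E
  have hEM : ∀ j k, (E * M) j k =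
      M j k + (if j = I then -2 else max 0 (-(sbar B j I))) * M I k := by
    intro j k
    rw [Matrix.mul_apply]
    have key : ∀ l, E j l * M l k =
        (if j = l then M l k else 0) +
        (if l = I then (if j = I then -2 else max 0 (-(sbar B j I))) * M I k else 0) := by
      intro l
      rw [hE j l]
      by_cases hl : l = I
      · rw [hl, if_pos rfl, if_pos rfl]
        by_cases hj : j = I
        · rw [if_pos hj, if_pos hj, if_pos hj]; ring
        · rw [if_neg hj, if_neg hj, if_neg hj]; ring
      · rw [if_neg hl, if_neg hl]
        by_cases hjl : j = l
        · rw [if_pos hjl, if_pos hjl]; ring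
        · rw [if_neg hjl, if_neg hjl]; ring
    rw [Finset.sum_congr rfl (fun l _ => key l), Finset.sum_add_distrib]
    congr 1 <;> simp
  -- right multiplication by F
  have hMF : ∀ (N : Matrix (Fin m) (Fin n) ℤ) j k, (N * F) j k =
      N j k + N j i * (if k = i then -2 else max 0 (sbar B I (Fin.castLE h k))) := by
    intro N j k
    rw [Matrix.mul_apply]
    have key : ∀ l, N j l * F l k =
        (if l = k then N j k else 0) +
        (if l = i then N j i * (if k = i then -2 else max 0 (sbar B I (Fin.castLE h k))) else 0) := by
      intro l
      rw [hF l k]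
      by_cases hl : l = i
      · rw [hl, if_pos rfl, if_pos rfl]
        by_cases hk2 : k = i
        · rw [hk2, if_pos rfl, if_pos rfl, if_pos rfl]; ring
        · rw [if_neg hk2, if_neg hk2, if_neg (fun hh => hk2 hh.symm : ¬ i = k)]; ring
      · rw [if_neg hl, if_neg hl]
        by_cases hlk : l = k
        · rw [if_pos hlk, if_pos hlk, hlk]; ring
        · rw [if_neg hlk, if_neg hlk]; ring
    rw [Finset.sum_congr rfl (fun l _ => key l), Finset.sum_add_distrib]
    congr 1 <;> simp
  have hMIi : M I i = 0 := by
    simp only [hMdef, sbarRect, Matrix.of_apply, ← hIdef, hvv, hwv, add_zero]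
  -- entry lemmas for the once-mutated matrix
  set B1 := mutate B (Sum.inl I) with hB1def
  have h1col : ∀ x, B1 x (Sum.inl I) = -B x (Sum.inl I) := by
    intro x; rw [hB1def]; simp [mutate]
  have h1row : ∀ y, B1 (Sum.inl I) y = -B (Sum.inl I) y := by
    intro y; rw [hB1def]; simp [mutate]
  have h1w : ∀ x, x ≠ Sum.inl I → B1 x (Sum.inr I) = B x (Sum.inr I) := by
    intro x hx; rw [hB1def]; simp [mutate, hx, hvw]
  have h1wrow : ∀ y, y ≠ Sum.inl I → B1 (Sum.inr I) y = B (Sum.inr I) y := by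
    intro y hy; rw [hB1def]; simp [mutate, hy, hwv]
  have h1gen : ∀ x y, x ≠ Sum.inl I → y ≠ Sum.inl I →
      B1 x y = B x y + (B x (Sum.inl I)).sign * max (B x (Sum.inl I) * B (Sum.inl I) y) 0 := by
    intro x y hx hy; rw [hB1def]; simp [mutate, hx, hy]
  have h1vw : B1 (Sum.inl I) (Sum.inr I) = 0 := by rw [h1row, hvw, neg_zero]
  have h1wv : B1 (Sum.inr I) (Sum.inl I) = 0 := by rw [h1col, hwv, neg_zero]
  -- entry lemmas for the twice-mutated matrix
  set B2 := mutate B1 (Sum.inr I) with hB2def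
  have hm_col : ∀ x, B2 x (Sum.inl I) = -B x (Sum.inl I) := by
    intro x
    by_cases hx : x = Sum.inr I
    · rw [hB2def, hx]; simp [mutate, h1wv, hwv]
    · rw [hB2def]; simp [mutate, hx, h1col, hwv]
  have hm_rowv : ∀ y, y ≠ Sum.inr I → B2 (Sum.inl I) y = -B (Sum.inl I) y := by
    intro y hy2
    rw [hB2def]; simp [mutate, hy2, h1row, hvw]
  have hm_roww : ∀ y, y ≠ Sum.inl I → y ≠ Sum.inr I → B2 (Sum.inr I) y = -B (Sum.inr I) y := by
    intro y hy1 hy2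
    rw [hB2def]; simp [mutate, hy2, h1wrow y hy1]
  have hm_gen : ∀ x y, x ≠ Sum.inl I → x ≠ Sum.inr I → y ≠ Sum.inl I → y ≠ Sum.inr I →
      B2 x y = B x y + (B x (Sum.inl I)).sign * max (B x (Sum.inl I) * B (Sum.inl I) y) 0
        + (B x (Sum.inr I)).sign * max (B x (Sum.inr I) * B (Sum.inr I) y) 0 := by
    intro x y hx1 hx2 hy1 hy2
    rw [hB2def]
    simp only [mutate, Matrix.of_apply, h1w x hx1, h1wrow y hy1]
    rw [if_neg (by simp [hx2, hy2] : ¬(x = Sum.inr I ∨ y = Sum.inr I)), h1gen x y hx1 hy1]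
  -- the proof
  ext j k
  rw [hMF (E * M) j k, hEM j k, hEM j i, hMIi, mul_zero, add_zero]
  by_cases hk : k = i
  · rw [hk, if_pos rfl, hMIi, mul_zero, add_zero]
    show _ = sbarRect h B2 j i
    simp only [sbarRect, Matrix.of_apply, ← hIdef, hm_col, hMdef]
    ring
  · rw [if_neg hk]
    have hki : Fin.castLE h k ≠ I := by
      rw [hIdef]; exact fun e => hk (Fin.castLE_injective h e)
    have hy1 : (Sum.inl (Fin.castLE h k) : Fin m ⊕ Fin m) ≠ Sum.inl I := by simp [hki]
    have hy2 : (Sum.inl (Fin.castLE h k) : Fin m ⊕ Fin m) ≠ Sum.inr I := by simp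
    by_cases hj : j = I
    · rw [hj, if_pos rfl, hMIi, zero_mul, add_zero]
      show _ = sbarRect h B2 I k
      simp only [sbarRect, Matrix.of_apply]
      rw [hm_rowv _ hy2, hm_roww _ hy1 hy2]
      simp only [hMdef, sbarRect, Matrix.of_apply]
      ring
    · rw [if_neg hj]
      have hx1 : (Sum.inl j : Fin m ⊕ Fin m) ≠ Sum.inl I := by simp [hj]
      have hx2 : (Sum.inl j : Fin m ⊕ Fin m) ≠ Sum.inr I := by simp
      have hx3 : (Sum.inr j : Fin m ⊕ Fin m) ≠ Sum.inl I := by simp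
      have hx4 : (Sum.inr j : Fin m ⊕ Fin m) ≠ Sum.inr I := by simp [hj]
      show _ = sbarRect h B2 j k
      simp only [sbarRect, Matrix.of_apply]
      rw [hm_gen _ _ hx1 hx2 hy1 hy2, hm_gen _ _ hx3 hx4 hy1 hy2]
      -- symmetry facts
      have ha3 : B (Sum.inr j) (Sum.inl I) = -(B (Sum.inl j) (Sum.inr I)) := by
        have h1 := hsym (Sum.inr j) (Sum.inl I)
        have h2 := hskew (Sum.inr I) (Sum.inl j)
        simp only [Sum.swap_inl, Sum.swap_inr] at h1
        omega
      have ha4 : B (Sum.inr j) (Sum.inr I) = -(B (Sum.inl j) (Sum.inl I)) := by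
        have h1 := hsym (Sum.inr j) (Sum.inr I)
        have h2 := hskew (Sum.inl I) (Sum.inl j)
        simp only [Sum.swap_inl, Sum.swap_inr] at h1
        omega
      have f1 : B (Sum.inl I) (Sum.inr j) = B (Sum.inl j) (Sum.inr I) := by
        have h1 := hsym (Sum.inl I) (Sum.inr j)
        simp only [Sum.swap_inl, Sum.swap_inr] at h1
        omega
      have f2 : B (Sum.inl I) (Sum.inl j) = -(B (Sum.inl j) (Sum.inl I)) := by
        have := hskew (Sum.inl I) (Sum.inl j); omega
      have hA : (B (Sum.inl j) (Sum.inr I) ≤ 0 ∧ 0 ≤ B (Sum.inl j) (Sum.inl I)) ∨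
          (B (Sum.inl j) (Sum.inl I) ≤ 0 ∧ 0 ≤ B (Sum.inl j) (Sum.inr I)) := by
        have p1 := hpath (Sum.inl j)
        have p2 := hpath (Sum.inr j)
        simp only [Sum.swap_inl, Sum.swap_inr] at p1 p2
        omega
      have e1 : B (Sum.inl (Fin.castLE h k)) (Sum.inl I) =
          -(B (Sum.inl I) (Sum.inl (Fin.castLE h k))) := by
        have := hskew (Sum.inl (Fin.castLE h k)) (Sum.inl I); omega
      have e2 : B (Sum.inr (Fin.castLE h k)) (Sum.inl I) =
          B (Sum.inr I) (Sum.inl (Fin.castLE h k)) := by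
        have h1 := hsym (Sum.inr (Fin.castLE h k)) (Sum.inl I)
        simp only [Sum.swap_inl, Sum.swap_inr] at h1
        omega
      have e3 : B (Sum.inl I) (Sum.inr (Fin.castLE h k)) =
          -(B (Sum.inr I) (Sum.inl (Fin.castLE h k))) := by
        have h1 := hsym (Sum.inl I) (Sum.inr (Fin.castLE h k))
        have h2 := hskew (Sum.inl (Fin.castLE h k)) (Sum.inr I)
        simp only [Sum.swap_inl, Sum.swap_inr] at h1
        have h3 := hsym (Sum.inr I) (Sum.inl (Fin.castLE h k))
        simp only [Sum.swap_inl, Sum.swap_inr] at h3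
        omega
      have hC : (B (Sum.inr I) (Sum.inl (Fin.castLE h k)) ≤ 0 ∧
            0 ≤ B (Sum.inl I) (Sum.inl (Fin.castLE h k)) ∧
            0 ≤ B (Sum.inl I) (Sum.inl (Fin.castLE h k)) + B (Sum.inr I) (Sum.inl (Fin.castLE h k))) ∨
          (B (Sum.inl I) (Sum.inl (Fin.castLE h k)) ≤ 0 ∧
            0 ≤ B (Sum.inr I) (Sum.inl (Fin.castLE h k)) ∧
            B (Sum.inl I) (Sum.inl (Fin.castLE h k)) + B (Sum.inr I) (Sum.inl (Fin.castLE h k)) ≤ 0) := by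
        have p3 := hpath (Sum.inl (Fin.castLE h k))
        have p4 := hpath (Sum.inr (Fin.castLE h k))
        simp only [Sum.swap_inl, Sum.swap_inr] at p3 p4
        have hs := hsign (Fin.castLE h k)
        simp only [sbar] at hs
        omega
      have key := core' (B (Sum.inl j) (Sum.inl I)) (B (Sum.inl j) (Sum.inr I))
        (B (Sum.inr j) (Sum.inl I)) (B (Sum.inr j) (Sum.inr I))
        (B (Sum.inl I) (Sum.inl (Fin.castLE h k))) (B (Sum.inr I) (Sum.inl (Fin.castLE h k)))
        ha3 ha4 hA hC
      simp only [hMdef, sbarRect, Matrix.of_apply, sbar, ← hIdef]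
      linarith [key]
end

section
/- Let B be an anti-symmetric quiver matrix on n vertex pairs and let j : Fin n. Let τ : Fin n ⊕ Fin n → Fin n ⊕ Fin n be the involution that swaps Sum.inl j and Sum.inr j and fixes every other index, and define B* by B* x y = B (τ x) (τ y). Then B* is again an anti-symmetric quiver matrix (B* is skew-symmetric, B* x y = B* (σ y) (σ x) for all x, y, and B* x (σ x) = 0 for all x), and its shortened exchange matrix b̄* satisfies: b̄* j k = b̄ j k for every k : Fin n; b̄* k j = −(b̄ k j) for every k : Fin n with k ≠ j; and b̄* p q = b̄ p q whenever p ≠ j and q ≠ j. In particular, relabelling the pair j only multiplies the j-th column of the shortened exchange matrix by −1. -/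
theorem stmt6 {n : ℕ} (B : Matrix (Fin n ⊕ Fin n) (Fin n ⊕ Fin n) ℤ)
    (hB : IsAntiSymQuiver B) (j : Fin n)
    (τ : Fin n ⊕ Fin n → Fin n ⊕ Fin n)
    (hτ : τ = Equiv.swap (Sum.inl j : Fin n ⊕ Fin n) (Sum.inr j))
    (Bs : Matrix (Fin n ⊕ Fin n) (Fin n ⊕ Fin n) ℤ)
    (hBs : ∀ x y, Bs x y = B (τ x) (τ y)) :
    IsAntiSymQuiver Bs ∧
    (∀ k : Fin n, sbar Bs j k = sbar B j k) ∧
    (∀ k : Fin n, k ≠ j → sbar Bs k j = -(sbar B k j)) ∧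
    (∀ p q : Fin n, p ≠ j → q ≠ j → sbar Bs p q = sbar B p q) := by
  subst hτ
  obtain ⟨h1, h2, h3⟩ := hB
  have hdiag : ∀ x, B x x = 0 := fun x => by have := h1 x x; omega
  have hcomm : ∀ x, (Equiv.swap (Sum.inl j : Fin n ⊕ Fin n) (Sum.inr j)) (Sum.swap x) = Sum.swap ((Equiv.swap (Sum.inl j : Fin n ⊕ Fin n) (Sum.inr j)) x) := by
    intro x
    rcases x with a | a <;> by_cases h : a = j
    · subst h; simp
    · rw [Sum.swap_inl, Equiv.swap_apply_of_ne_of_ne (by simp) (by simpa using h),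
        Equiv.swap_apply_of_ne_of_ne (by simpa using h) (by simp), Sum.swap_inl]
    · subst h; simp
    · rw [Sum.swap_inr, Equiv.swap_apply_of_ne_of_ne (by simpa using h) (by simp),
        Equiv.swap_apply_of_ne_of_ne (by simp) (by simpa using h), Sum.swap_inr]
  have hfixl : ∀ k : Fin n, k ≠ j → (Equiv.swap (Sum.inl j : Fin n ⊕ Fin n) (Sum.inr j)) (Sum.inl k) = Sum.inl k := by
    intro k hk
    exact Equiv.swap_apply_of_ne_of_ne (by simpa using hk) (by simp)
  have hfixr : ∀ k : Fin n, k ≠ j → (Equiv.swap (Sum.inl j : Fin n ⊕ Fin n) (Sum.inr j)) (Sum.inr k) = Sum.inr k := by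
    intro k hk
    exact Equiv.swap_apply_of_ne_of_ne (by simp) (by simpa using hk)
  have hjl : (Equiv.swap (Sum.inl j : Fin n ⊕ Fin n) (Sum.inr j)) (Sum.inl j) = Sum.inr j := by simp
  have hjr : (Equiv.swap (Sum.inl j : Fin n ⊕ Fin n) (Sum.inr j)) (Sum.inr j) = Sum.inl j := by simp
  refine ⟨⟨?_, ?_, ?_⟩, ?_, ?_, ?_⟩
  · intro x y; rw [hBs, hBs, h1]
  · intro x y; rw [hBs, hBs, h2 ((Equiv.swap (Sum.inl j : Fin n ⊕ Fin n) (Sum.inr j)) x) ((Equiv.swap (Sum.inl j : Fin n ⊕ Fin n) (Sum.inr j)) y), hcomm, hcomm]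
  · intro x; rw [hBs, hcomm, h3]
  · intro k
    by_cases hk : k = j
    · subst hk
      simp only [sbar, hBs, hjl, hjr]
      have e1 := h3 (Sum.inr k); rw [Sum.swap_inr] at e1
      have e2 := h3 (Sum.inl k); rw [Sum.swap_inl] at e2
      rw [hdiag, hdiag, e1, e2]
    · simp only [sbar, hBs, hjl, hjr, hfixl k hk]
      ring
  · intro k hk
    have e1 : B (Sum.inl k) (Sum.inr j) = - B (Sum.inr k) (Sum.inl j) := by
      rw [h2 (Sum.inl k) (Sum.inr j), Sum.swap_inr, Sum.swap_inl, h1]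
    have e2 : B (Sum.inr k) (Sum.inr j) = - B (Sum.inl k) (Sum.inl j) := by
      rw [h2 (Sum.inr k) (Sum.inr j), Sum.swap_inr, Sum.swap_inr, h1]
    simp only [sbar, hBs, hjl, hfixl k hk, hfixr k hk, e1, e2]
    ring
  · intro p q hp hq
    simp only [sbar, hBs, hfixl p hp, hfixr p hp, hfixl q hq]
end
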